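/- arXiv:2502.11169 — 6 statements merged into one kernel-verified Lean document; each statement's English description precedes it below -/
import Mathlib

section
/- Let Θ be a finite nonempty type, let π : Θ → ℝ be a prior with π θ > 0 for all θ and ∑_θ π θ = 1, let L : Θ → ℝ satisfy L θ > 0 for all θ, and let θ* : Θ. Suppose ε ≥ 0 and L θ ≤ ε * L θ* for all θ ≠ θ*. Then the posterior satisfies post θ* = (L θ* * π θ*) / (∑_θ L θ * π θ) ≥ (1 + ((1 − π θ*) / π θ*) * ε)⁻¹. -/
theorem stmt_2 {Θ : Type*} [Fintype Θ] [Nonempty Θ]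
    (pr L : Θ → ℝ) (hpr : ∀ θ, 0 < pr θ) (hsum : ∑ θ, pr θ = 1)
    (hL : ∀ θ, 0 < L θ) (θs : Θ) (ε : ℝ) (hε : 0 ≤ ε)
    (hLε : ∀ θ, θ ≠ θs → L θ ≤ ε * L θs) :
    (L θs * pr θs) / (∑ θ, L θ * pr θ) ≥
      (1 + ((1 - pr θs) / pr θs) * ε)⁻¹ := by
  classical
  have hps : 0 < pr θs := hpr θs
  have hLs : 0 < L θs := hL θs
  have hA : 0 < L θs * pr θs := mul_pos hLs hps
  have hrest : ∑ θ ∈ Finset.univ.erase θs, pr θ = 1 - pr θs := by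
    have := Finset.add_sum_erase Finset.univ pr (Finset.mem_univ θs)
    linarith [hsum, this]
  have hSpos : 0 < ∑ θ, L θ * pr θ :=
    Finset.sum_pos (fun θ _ => mul_pos (hL θ) (hpr θ)) ⟨θs, Finset.mem_univ θs⟩
  have hbound : ∑ θ, L θ * pr θ ≤ L θs * pr θs * (1 + ((1 - pr θs) / pr θs) * ε) := by
    have h1 : ∑ θ, L θ * pr θ = L θs * pr θs + ∑ θ ∈ Finset.univ.erase θs, L θ * pr θ :=
      (Finset.add_sum_erase Finset.univ (fun θ => L θ * pr θ) (Finset.mem_univ θs)).symm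
    have h2 : ∑ θ ∈ Finset.univ.erase θs, L θ * pr θ ≤
        ∑ θ ∈ Finset.univ.erase θs, ε * L θs * pr θ := by
      refine Finset.sum_le_sum fun θ hθ => ?_
      have hne : θ ≠ θs := (Finset.mem_erase.mp hθ).1
      have := hLε θ hne
      nlinarith [(hpr θ).le]
    have h3 : ∑ θ ∈ Finset.univ.erase θs, ε * L θs * pr θ = ε * L θs * (1 - pr θs) := by
      rw [← Finset.mul_sum, hrest]
    have h4 : L θs * pr θs * (1 + ((1 - pr θs) / pr θs) * ε)
        = L θs * pr θs + ε * L θs * (1 - pr θs) := by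
      field_simp
    linarith
  have hden : 0 < 1 + ((1 - pr θs) / pr θs) * ε := by
    have : 0 < L θs * pr θs * (1 + ((1 - pr θs) / pr θs) * ε) := lt_of_lt_of_le hSpos hbound
    have h1p : 0 ≤ 1 - pr θs := by
      have := hrest ▸ Finset.sum_nonneg (fun θ _ => (hpr θ).le)
      linarith
    positivity
  rw [ge_iff_le, le_div_iff₀ hSpos]
  rw [inv_mul_le_iff₀ hden] at *
  nlinarith
end

section
/- Let Θ be a finite nonempty type, let π : Θ → ℝ be a prior with π θ > 0 for all θ and ∑_θ π θ = 1, let L : Θ → ℝ satisfy L θ > 0 for all θ, let θ* : Θ, and let g : Θ → ℝ satisfy g θ ≥ 0 for all θ. Suppose ε ≥ 0 and L θ ≤ ε * L θ* for all θ ≠ θ*. Then the posterior predictive probability p = ∑_θ g θ * post θ satisfies p ≥ g θ* * (1 + ((1 − π θ*) / π θ*) * ε)⁻¹, where post θ = (L θ * π θ) / (∑_{θ'} L θ' * π θ'). -/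
theorem stmt_3 {Θ : Type*} [Fintype Θ] [Nonempty Θ]
    (pr L g : Θ → ℝ) (hpr : ∀ θ, 0 < pr θ) (hsum : ∑ θ, pr θ = 1)
    (hL : ∀ θ, 0 < L θ) (hg : ∀ θ, 0 ≤ g θ) (θs : Θ) (ε : ℝ) (hε : 0 ≤ ε)
    (hLε : ∀ θ, θ ≠ θs → L θ ≤ ε * L θs) :
    (∑ θ, g θ * ((L θ * pr θ) / (∑ θ', L θ' * pr θ'))) ≥
      g θs * (1 + ((1 - pr θs) / pr θs) * ε)⁻¹ := by
  classical
  set S := ∑ θ', L θ' * pr θ' with hSdef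
  have hS : 0 < S := Finset.sum_pos (fun θ _ => mul_pos (hL θ) (hpr θ)) ⟨θs, Finset.mem_univ θs⟩
  set p := pr θs with hpdef
  have hp : 0 < p := hpr θs
  have hrest : ∑ θ ∈ Finset.univ.erase θs, pr θ = 1 - p := by
    have := Finset.add_sum_erase Finset.univ pr (Finset.mem_univ θs)
    rw [hsum] at this
    linarith
  have h1p : 0 ≤ 1 - p := by
    rw [← hrest]
    exact Finset.sum_nonneg fun θ _ => (hpr θ).le
  have hSle : S ≤ L θs * (p + (1 - p) * ε) := by
    have hsplit := Finset.add_sum_erase Finset.univ (fun θ => L θ * pr θ) (Finset.mem_univ θs)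
    have hb : ∑ θ ∈ Finset.univ.erase θs, L θ * pr θ ≤ ε * L θs * (1 - p) := by
      rw [← hrest, Finset.mul_sum]
      refine Finset.sum_le_sum fun θ hθ => ?_
      have hne : θ ≠ θs := Finset.ne_of_mem_erase hθ
      exact mul_le_mul_of_nonneg_right (hLε θ hne) (hpr θ).le
    rw [hSdef, ← hsplit]
    nlinarith [hL θs]
  have hden : 0 < p + (1 - p) * ε := by positivity
  have hinv : (1 + (1 - p) / p * ε)⁻¹ = p / (p + (1 - p) * ε) := by
    rw [eq_div_iff hden.ne', inv_mul_eq_div, div_eq_iff (by positivity : (1 + (1 - p) / p * ε) ≠ 0)]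
    field_simp
  rw [hinv]
  have hterm : g θs * (p / (p + (1 - p) * ε)) ≤ g θs * ((L θs * p) / S) := by
    refine mul_le_mul_of_nonneg_left ?_ (hg θs)
    rw [div_le_div_iff₀ hden hS]
    nlinarith [hL θs]
  refine le_trans hterm ?_
  have : g θs * (L θs * p / S) = g θs * (L θs * pr θs / S) := rfl
  rw [this]
  exact Finset.single_le_sum (f := fun θ => g θ * (L θ * pr θ / S))
    (fun θ _ => mul_nonneg (hg θ) (div_nonneg (mul_pos (hL θ) (hpr θ)).le hS.le))
    (Finset.mem_univ θs)
end

section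
/- Let Θ be a finite nonempty type, let π : Θ → ℝ be a prior with π θ > 0 for all θ and ∑_θ π θ = 1, let L : Θ → ℝ satisfy L θ > 0 for all θ, let θ* : Θ, and let g : Θ → ℝ satisfy g θ ≥ 0 for all θ. Suppose ε ≥ 0, L θ ≤ ε * L θ* for all θ ≠ θ*, and ((1 − π θ*) / π θ*) * ε ≤ 1. Then with post θ = (L θ * π θ) / (∑_{θ'} L θ' * π θ') and p = ∑_θ g θ * post θ, we have g θ* − p ≤ g θ* * ((1 − π θ*) / π θ*) * ε. -/
theorem stmt_4 {Θ : Type*} [Fintype Θ] [Nonempty Θ]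
    (pr L g : Θ → ℝ) (hpr : ∀ θ, 0 < pr θ) (hsum : ∑ θ, pr θ = 1)
    (hL : ∀ θ, 0 < L θ) (hg : ∀ θ, 0 ≤ g θ) (θs : Θ) (ε : ℝ) (hε : 0 ≤ ε)
    (hLε : ∀ θ, θ ≠ θs → L θ ≤ ε * L θs)
    (hx : ((1 - pr θs) / pr θs) * ε ≤ 1) :
    g θs - (∑ θ, g θ * ((L θ * pr θ) / (∑ θ', L θ' * pr θ'))) ≤
      g θs * ((1 - pr θs) / pr θs) * ε := by
  classical
  have hL0 : L θs ≠ 0 := (hL θs).ne'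
  have hp0 : pr θs ≠ 0 := (hpr θs).ne'
  have h1ε : (0:ℝ) ≤ 1 - pr θs := by
    nlinarith [Finset.single_le_sum (f := pr) (fun θ _ => (hpr θ).le) (Finset.mem_univ θs), hsum]
  set Z : ℝ := ∑ θ', L θ' * pr θ' with hZ
  have ha : 0 < L θs * pr θs := mul_pos (hL θs) (hpr θs)
  have hZpos : 0 < Z := Finset.sum_pos (fun θ _ => mul_pos (hL θ) (hpr θ)) ⟨θs, Finset.mem_univ θs⟩
  have haZ : L θs * pr θs ≤ Z :=
    Finset.single_le_sum (f := fun θ => L θ * pr θ)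
      (fun θ _ => le_of_lt (mul_pos (hL θ) (hpr θ))) (Finset.mem_univ θs)
  have hp : g θs * ((L θs * pr θs) / Z) ≤ ∑ θ, g θ * ((L θ * pr θ) / Z) :=
    Finset.single_le_sum (f := fun θ => g θ * ((L θ * pr θ) / Z))
      (fun θ _ => mul_nonneg (hg θ) (div_nonneg (le_of_lt (mul_pos (hL θ) (hpr θ))) hZpos.le))
      (Finset.mem_univ θs)
  have key : 1 - (L θs * pr θs) / Z ≤ (1 - pr θs) / pr θs * ε := by
    have h1 : 1 - (L θs * pr θs) / Z = (Z - L θs * pr θs) / Z := by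
      field_simp
    rw [h1]
    have hnum : Z - L θs * pr θs ≤ ε * L θs * (1 - pr θs) := by
      have : Z - L θs * pr θs = ∑ θ ∈ Finset.univ.erase θs, L θ * pr θ := by
        rw [hZ, ← Finset.add_sum_erase _ _ (Finset.mem_univ θs)]; ring
      rw [this]
      have h2 : ∑ θ ∈ Finset.univ.erase θs, L θ * pr θ
          ≤ ∑ θ ∈ Finset.univ.erase θs, ε * L θs * pr θ := by
        refine Finset.sum_le_sum fun θ hθ => ?_
        exact mul_le_mul_of_nonneg_right (hLε θ (Finset.mem_erase.mp hθ).1) (hpr θ).le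
      have h3 : ∑ θ ∈ Finset.univ.erase θs, ε * L θs * pr θ = ε * L θs * (1 - pr θs) := by
        rw [← Finset.mul_sum]
        congr 1
        have := Finset.add_sum_erase _ pr (Finset.mem_univ θs)
        rw [hsum] at this
        linarith
      linarith
    calc (Z - L θs * pr θs) / Z ≤ (ε * L θs * (1 - pr θs)) / (L θs * pr θs) := by
          apply div_le_div₀ (mul_nonneg (mul_nonneg hε (hL θs).le) h1ε) hnum ha haZ
      _ = (1 - pr θs) / pr θs * ε := by field_simp
  have hgθs := hg θs
  calc g θs - ∑ θ, g θ * ((L θ * pr θ) / Z)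
      ≤ g θs - g θs * ((L θs * pr θs) / Z) := by linarith
    _ = g θs * (1 - (L θs * pr θs) / Z) := by ring
    _ ≤ g θs * ((1 - pr θs) / pr θs * ε) := mul_le_mul_of_nonneg_left key hgθs
    _ = g θs * ((1 - pr θs) / pr θs) * ε := by ring
end

section
/- Let Θ be a finite nonempty type, let π : Θ → ℝ be a prior with π θ > 0 for all θ and ∑_θ π θ = 1, let θ* : Θ satisfy π θ* ≤ 1/2, let δ ∈ (0, 1), λ > 0, and let n be a real number with n ≥ (Real.log (1/δ) + Real.log ((1 − π θ*) / π θ*)) / λ. Let L : Θ → ℝ satisfy L θ > 0 for all θ and L θ ≤ Real.exp (−2 * n * λ + 2 * Real.log (1/δ)) * L θ* for all θ ≠ θ*, and let g : Θ → ℝ satisfy g θ ≥ 0 for all θ. Then with post θ = (L θ * π θ) / (∑_{θ'} L θ' * π θ') and p = ∑_θ g θ * post θ, we have g θ* − p ≤ g θ* * ((1 − π θ*) / π θ*) * Real.exp (−2 * n * λ + 2 * Real.log (1/δ)). -/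
theorem stmt_6 {Θ : Type*} [Fintype Θ] [Nonempty Θ]
    (pr : Θ → ℝ) (hpr : ∀ θ, 0 < pr θ) (hsum : ∑ θ, pr θ = 1)
    (θs : Θ) (hθs : pr θs ≤ 1 / 2)
    (δ lam n : ℝ) (hδ : δ ∈ Set.Ioo (0 : ℝ) 1) (hlam : 0 < lam)
    (hn : n ≥ (Real.log (1 / δ) + Real.log ((1 - pr θs) / pr θs)) / lam)
    (L g : Θ → ℝ) (hL : ∀ θ, 0 < L θ)
    (hLε : ∀ θ, θ ≠ θs →
      L θ ≤ Real.exp (-2 * n * lam + 2 * Real.log (1 / δ)) * L θs)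
    (hg : ∀ θ, 0 ≤ g θ) :
    g θs - (∑ θ, g θ * ((L θ * pr θ) / (∑ θ', L θ' * pr θ'))) ≤
      g θs * ((1 - pr θs) / pr θs) *
        Real.exp (-2 * n * lam + 2 * Real.log (1 / δ)) := by
  classical
  set ε := Real.exp (-2 * n * lam + 2 * Real.log (1 / δ)) with hεdef
  have hε : 0 < ε := Real.exp_pos _
  set S := ∑ θ', L θ' * pr θ' with hSdef
  have hS : 0 < S :=
    Finset.sum_pos (fun θ _ => mul_pos (hL θ) (hpr θ)) Finset.univ_nonempty
  have hdS : L θs * pr θs ≤ S :=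
    Finset.single_le_sum (f := fun θ => L θ * pr θ)
      (fun θ _ => (mul_pos (hL θ) (hpr θ)).le) (Finset.mem_univ θs)
  -- lower bound p by the θs term
  have hterm : g θs * ((L θs * pr θs) / S) ≤ ∑ θ, g θ * ((L θ * pr θ) / S) :=
    Finset.single_le_sum (f := fun θ => g θ * ((L θ * pr θ) / S))
      (fun θ _ => mul_nonneg (hg θ)
        (div_nonneg (mul_nonneg (hL θ).le (hpr θ).le) hS.le))
      (Finset.mem_univ θs)
  have step1 : g θs - (∑ θ, g θ * ((L θ * pr θ) / S)) ≤
      g θs * (1 - (L θs * pr θs) / S) := by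
    have : g θs * (1 - (L θs * pr θs) / S)
        = g θs - g θs * ((L θs * pr θs) / S) := by ring
    rw [this]
    linarith
  have hcompl : S - L θs * pr θs ≤ ε * L θs * (1 - pr θs) := by
    have h1 : S - L θs * pr θs = ∑ θ ∈ Finset.univ.erase θs, L θ * pr θ := by
      rw [hSdef, ← Finset.add_sum_erase _ _ (Finset.mem_univ θs)]; ring
    have h2 : ∑ θ ∈ Finset.univ.erase θs, L θ * pr θ ≤
        ∑ θ ∈ Finset.univ.erase θs, ε * L θs * pr θ := by
      refine Finset.sum_le_sum fun θ hθ => ?_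
      have hne : θ ≠ θs := Finset.ne_of_mem_erase hθ
      have := hLε θ hne
      nlinarith [(hpr θ).le]
    have h3 : ∑ θ ∈ Finset.univ.erase θs, ε * L θs * pr θ
        = ε * L θs * (1 - pr θs) := by
      rw [← Finset.mul_sum]
      have : ∑ θ ∈ Finset.univ.erase θs, pr θ = 1 - pr θs := by
        have := Finset.add_sum_erase Finset.univ pr (Finset.mem_univ θs)
        rw [hsum] at this
        linarith
      rw [this]
    rw [h1]; linarith
  have hfactor : 1 - (L θs * pr θs) / S ≤ (1 - pr θs) / pr θs * ε := by
    have h4 : 1 - (L θs * pr θs) / S = (S - L θs * pr θs) / S := by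
      field_simp
    rw [h4]
    have h5 : (S - L θs * pr θs) / S
        ≤ (ε * L θs * (1 - pr θs)) / (L θs * pr θs) :=
      div_le_div₀ (le_trans (sub_nonneg.mpr hdS) hcompl) hcompl (mul_pos (hL θs) (hpr θs)) hdS
    have h6 : (ε * L θs * (1 - pr θs)) / (L θs * pr θs)
        = (1 - pr θs) / pr θs * ε := by
      field_simp [(hL θs).ne', (hpr θs).ne']
    linarith [h6 ▸ h5]
  calc g θs - (∑ θ, g θ * ((L θ * pr θ) / S))
      ≤ g θs * (1 - (L θs * pr θs) / S) := step1
    _ ≤ g θs * ((1 - pr θs) / pr θs * ε) :=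
        mul_le_mul_of_nonneg_left hfactor (hg θs)
    _ = g θs * ((1 - pr θs) / pr θs) * ε := by ring
end

section
/- Let Θ be a finite nonempty type, let π : Θ → ℝ be a prior with π θ > 0 for all θ and ∑_θ π θ = 1, let θ* : Θ satisfy π θ* ≤ 1/2, let δ ∈ (0, 1), λ > 0, m ≥ 1, and let ñ : Fin m → ℝ with ñ j ≥ 0 and φ : Fin m → ℝ with 0 < φ j ≤ 1 for all j. Set n = ∑_j ñ j and suppose n ≥ (Real.log (1/δ) + Real.log ((1 − π θ*) / π θ*)) / (λ * min_j φ j). Let E = Real.exp (−2 * (∑_j ñ j * φ j) * λ + 2 * Real.log (1/δ)), let L : Θ → ℝ satisfy L θ > 0 for all θ and L θ ≤ E * L θ* for all θ ≠ θ*, and let g : Θ → ℝ satisfy g θ ≥ 0 for all θ. Then with post θ = (L θ * π θ) / (∑_{θ'} L θ' * π θ') and p = ∑_θ g θ * post θ, we have g θ* − p ≤ g θ* * ((1 − π θ*) / π θ*) * E. -/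
theorem stmt_7 {Θ : Type*} [Fintype Θ] [Nonempty Θ]
    (pr : Θ → ℝ) (hpr : ∀ θ, 0 < pr θ) (hsum : ∑ θ, pr θ = 1)
    (θs : Θ) (hθs : pr θs ≤ 1 / 2)
    (δ lam : ℝ) (hδ : δ ∈ Set.Ioo (0 : ℝ) 1) (hlam : 0 < lam)
    (m : ℕ) (hm : 1 ≤ m)
    (ntil φ : Fin m → ℝ) (hntil : ∀ j, 0 ≤ ntil j)
    (hφ : ∀ j, 0 < φ j ∧ φ j ≤ 1)
    (hn : (∑ j, ntil j) ≥
      (Real.log (1 / δ) + Real.log ((1 - pr θs) / pr θs)) / (lam * ⨅ j, φ j))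
    (L g : Θ → ℝ) (hL : ∀ θ, 0 < L θ)
    (hLε : ∀ θ, θ ≠ θs →
      L θ ≤ Real.exp (-2 * (∑ j, ntil j * φ j) * lam + 2 * Real.log (1 / δ)) * L θs)
    (hg : ∀ θ, 0 ≤ g θ) :
    g θs - (∑ θ, g θ * ((L θ * pr θ) / (∑ θ', L θ' * pr θ'))) ≤
      g θs * ((1 - pr θs) / pr θs) *
        Real.exp (-2 * (∑ j, ntil j * φ j) * lam + 2 * Real.log (1 / δ)) := by
  classical
  set E := Real.exp (-2 * (∑ j, ntil j * φ j) * lam + 2 * Real.log (1 / δ)) with hE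
  set Z := ∑ θ', L θ' * pr θ' with hZdef
  have hZpos : 0 < Z :=
    Finset.sum_pos (fun θ _ => mul_pos (hL θ) (hpr θ)) Finset.univ_nonempty
  have hEpos : 0 < E := Real.exp_pos _
  have hsplit : L θs * pr θs + ∑ θ ∈ Finset.univ.erase θs, L θ * pr θ = Z :=
    Finset.add_sum_erase _ (fun θ => L θ * pr θ) (Finset.mem_univ θs)
  have hS_nonneg : 0 ≤ ∑ θ ∈ Finset.univ.erase θs, L θ * pr θ :=
    Finset.sum_nonneg fun θ _ => (mul_pos (hL θ) (hpr θ)).le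
  have hprsum : ∑ θ ∈ Finset.univ.erase θs, pr θ = 1 - pr θs := by
    have h := Finset.add_sum_erase Finset.univ pr (Finset.mem_univ θs)
    linarith [h, hsum]
  have hSle : ∑ θ ∈ Finset.univ.erase θs, L θ * pr θ ≤ E * L θs * (1 - pr θs) := by
    calc ∑ θ ∈ Finset.univ.erase θs, L θ * pr θ
        ≤ ∑ θ ∈ Finset.univ.erase θs, (E * L θs) * pr θ :=
          Finset.sum_le_sum fun θ hθ =>
            mul_le_mul_of_nonneg_right (hLε θ (Finset.ne_of_mem_erase hθ)) (hpr θ).le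
      _ = E * L θs * (1 - pr θs) := by rw [← Finset.mul_sum, hprsum]
  have hp_ge : g θs * ((L θs * pr θs) / Z) ≤ ∑ θ, g θ * ((L θ * pr θ) / Z) :=
    Finset.single_le_sum
      (fun θ _ => mul_nonneg (hg θ) (div_nonneg (mul_pos (hL θ) (hpr θ)).le hZpos.le))
      (Finset.mem_univ θs)
  have hprθs := hpr θs
  have h1pr : 0 < 1 - pr θs := by linarith
  have step1 : g θs - (∑ θ, g θ * ((L θ * pr θ) / Z)) ≤
      g θs * ((∑ θ ∈ Finset.univ.erase θs, L θ * pr θ) / Z) := by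
    have hSeq : ∑ θ ∈ Finset.univ.erase θs, L θ * pr θ = Z - L θs * pr θs := by
      linarith [hsplit]
    rw [hSeq, sub_div, div_self hZpos.ne', mul_sub, mul_one]
    linarith [hp_ge]
  have hdiv : (∑ θ ∈ Finset.univ.erase θs, L θ * pr θ) / Z ≤
      (E * L θs * (1 - pr θs)) / (L θs * pr θs) := by
    apply div_le_div₀ (mul_nonneg (mul_nonneg hEpos.le (hL θs).le) h1pr.le) hSle
      (mul_pos (hL θs) hprθs)
    linarith [hS_nonneg, hsplit]
  have heq : (E * L θs * (1 - pr θs)) / (L θs * pr θs) = ((1 - pr θs) / pr θs) * E := by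
    have h1 := (hL θs).ne'
    have h2 := hprθs.ne'
    field_simp
  calc g θs - (∑ θ, g θ * ((L θ * pr θ) / Z))
      ≤ g θs * ((∑ θ ∈ Finset.univ.erase θs, L θ * pr θ) / Z) := step1
    _ ≤ g θs * (((1 - pr θs) / pr θs) * E) := by
        apply mul_le_mul_of_nonneg_left _ (hg θs)
        rw [← heq]; exact hdiv
    _ = g θs * ((1 - pr θs) / pr θs) * E := by ring
end

section
/- Let n ≥ 1, let (Ω, 𝔽, μ) be a measure space with μ σ-finite, and for each i ∈ Fin n let p_i*, p_i : Ω → ℝ be measurable with p_i* x ≥ 0 and p_i x ≥ 0 for μ-a.e. x, ∫ p_i* dμ = 1 and ∫ p_i dμ = 1. Let P be the product measure on Ωⁿ of the probability measures with density p_i* with respect to μ, and let δ > 0. Then P { x ∈ Ωⁿ : ∏_i p_i (x i) > Real.exp (−2 * ∑_i H²_i + 2 * Real.log (1/δ)) * ∏_i p_i* (x i) } ≤ δ, where H²_i = (1/2) * ∫ (Real.sqrt (p_i* y) − Real.sqrt (p_i y))^2 dμ(y). -/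
open MeasureTheory Set
open scoped ENNReal

lemma my_lintegral_pi_prod {Ω : Type*} [MeasurableSpace Ω] :
    ∀ (n : ℕ) (μs : Fin n → Measure Ω), (∀ i, SigmaFinite (μs i)) →
    ∀ (f : Fin n → Ω → ℝ≥0∞), (∀ i, Measurable (f i)) →
    ∫⁻ x, ∏ i, f i (x i) ∂(Measure.pi μs) = ∏ i, ∫⁻ y, f i y ∂(μs i) := by
  intro n
  induction n with
  | zero =>
    intro μs hσ f hf
    haveI := hσ
    simp [MeasureTheory.lintegral_one, Measure.pi_univ]
  | succ n ih =>
    intro μs hσ f hf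
    haveI := hσ
    set E := MeasurableEquiv.piFinSuccAbove (fun _ : Fin (n + 1) => Ω) 0 with hE
    have e := measurePreserving_piFinSuccAbove μs 0
    have hmeas : Measurable fun z : Ω × (Fin n → Ω) => ∏ i, f i (E.symm z i) :=
      Finset.measurable_prod _ fun i _ =>
        (hf i).comp ((measurable_pi_apply i).comp E.symm.measurable)
    have h1 : ∫⁻ x, ∏ i, f i (x i) ∂(Measure.pi μs)
        = ∫⁻ z, ∏ i, f i (E.symm z i)
            ∂((μs 0).prod (Measure.pi fun j => μs ((0 : Fin (n+1)).succAbove j))) := by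
      rw [← e.lintegral_comp hmeas]
      congr 1
      funext x
      simp [hE, MeasurableEquiv.piFinSuccAbove, Fin.insertNthEquiv,
        Fin.insertNth_zero', Fin.cons_self_tail]
    rw [h1]
    have h2 : ∀ z : Ω × (Fin n → Ω),
        ∏ i, f i (E.symm z i) = f 0 z.1 * ∏ j, f j.succ (z.2 j) := by
      rintro ⟨a, y⟩
      have hsy : E.symm (a, y) = Fin.cons a y := by
        simp [hE, MeasurableEquiv.piFinSuccAbove, Fin.insertNthEquiv,
          Fin.insertNth_zero', Fin.cons_self_tail, Fin.consEquiv]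
      rw [hsy, Fin.prod_univ_succ]
      simp
    simp_rw [h2]
    have h3 := lintegral_prod_mul (μ := μs 0)
      (ν := Measure.pi fun j => μs ((0 : Fin (n+1)).succAbove j))
      (f := f 0) (g := fun y => ∏ j, f j.succ (y j)) (hf 0).aemeasurable
      ((Finset.measurable_prod _ fun j _ =>
        (hf j.succ).comp (measurable_pi_apply j)).aemeasurable)
    rw [h3, ih (fun j => μs ((0 : Fin (n+1)).succAbove j)) (fun j => hσ _) (fun j => f j.succ) (fun j => hf j.succ), Fin.prod_univ_succ]
    simp [Fin.succAbove_zero]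

lemma my_pi_withDensity {Ω : Type*} [MeasurableSpace Ω] (μ : Measure Ω) [SigmaFinite μ]
    (n : ℕ) (f : Fin n → Ω → ℝ≥0∞) (hf : ∀ i, Measurable (f i))
    [inst : ∀ i, SigmaFinite (μ.withDensity (f i))] :
    Measure.pi (fun i => μ.withDensity (f i)) =
      (Measure.pi fun _ : Fin n => μ).withDensity (fun x => ∏ i, f i (x i)) := by
  refine Measure.pi_eq (μ := fun i => μ.withDensity (f i))
    (μ' := (Measure.pi fun _ : Fin n => μ).withDensity fun x => ∏ i, f i (x i))
    fun s hs => ?_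
  rw [withDensity_apply _ (MeasurableSet.univ_pi hs),
    ← lintegral_indicator (MeasurableSet.univ_pi hs) _]
  have hind : ∀ x : Fin n → Ω,
      (Set.univ.pi s).indicator (fun x => ∏ i, f i (x i)) x
        = ∏ i, (s i).indicator (f i) (x i) := by
    intro x
    by_cases hx : x ∈ Set.univ.pi s
    · rw [Set.indicator_of_mem hx]
      exact Finset.prod_congr rfl fun i _ =>
        (Set.indicator_of_mem (hx i trivial) _).symm
    · rw [Set.indicator_of_notMem hx]
      simp only [Set.mem_pi, Set.mem_univ, forall_true_left, not_forall] at hx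
      obtain ⟨i, hi⟩ := hx
      exact (Finset.prod_eq_zero (Finset.mem_univ i)
        (by simp [Set.indicator_of_notMem hi])).symm
  simp_rw [hind]
  rw [my_lintegral_pi_prod n _ (fun _ => inferInstance) _
    (fun i => (hf i).indicator (hs i))]
  exact Finset.prod_congr rfl fun i _ => by
    rw [lintegral_indicator (hs i) _, withDensity_apply _ (hs i)]

theorem stmt_11 {Ω : Type*} [MeasurableSpace Ω] (μ : MeasureTheory.Measure Ω)
    [MeasureTheory.SigmaFinite μ] (n : ℕ) (hn : 1 ≤ n)
    (ps p : Fin n → Ω → ℝ)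
    (hpsm : ∀ i, Measurable (ps i)) (hpm : ∀ i, Measurable (p i))
    (hps0 : ∀ i, ∀ᵐ x ∂μ, 0 ≤ ps i x) (hp0 : ∀ i, ∀ᵐ x ∂μ, 0 ≤ p i x)
    (hps1 : ∀ i, ∫ x, ps i x ∂μ = 1) (hp1 : ∀ i, ∫ x, p i x ∂μ = 1)
    (δ : ℝ) (hδ : 0 < δ) :
    (MeasureTheory.Measure.pi fun i =>
        μ.withDensity fun y => ENNReal.ofReal (ps i y))
      {x | ∏ i, p i (x i) >
        Real.exp (-2 * (∑ i, (1 / 2) *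
            ∫ y, (Real.sqrt (ps i y) - Real.sqrt (p i y)) ^ 2 ∂μ)
          + 2 * Real.log (1 / δ)) * ∏ i, ps i (x i)} ≤ ENNReal.ofReal δ := by
  classical
  set S : ℝ := ∑ i, (1 / 2) *
      ∫ y, (Real.sqrt (ps i y) - Real.sqrt (p i y)) ^ 2 ∂μ with hS
  set L : ℝ := Real.log (1 / δ) with hL
  set c : ℝ := Real.exp (-2 * S + 2 * L) with hc
  set K : ℝ := Real.exp (S - L) with hK
  set g : Fin n → Ω → ℝ := fun i y => Real.sqrt (ps i y) * Real.sqrt (p i y) with hg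
  set BC : Fin n → ℝ := fun i => ∫ y, g i y ∂μ with hBCdef
  -- integrability facts
  have hpsInt : ∀ i, MeasureTheory.Integrable (ps i) μ := by
    intro i
    by_contra h
    have := hps1 i
    rw [MeasureTheory.integral_undef h] at this
    exact one_ne_zero this.symm
  have hpInt : ∀ i, MeasureTheory.Integrable (p i) μ := by
    intro i
    by_contra h
    have := hp1 i
    rw [MeasureTheory.integral_undef h] at this
    exact one_ne_zero this.symm
  have hgm : ∀ i, Measurable (g i) := fun i => (hpsm i).sqrt.mul (hpm i).sqrt
  have hgnn : ∀ i, ∀ y, 0 ≤ g i y := fun i y =>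
    mul_nonneg (Real.sqrt_nonneg _) (Real.sqrt_nonneg _)
  have hgInt : ∀ i, MeasureTheory.Integrable (g i) μ := by
    intro i
    refine MeasureTheory.Integrable.mono'
      (((hpsInt i).add (hpInt i)).div_const 2)
      (hgm i).aestronglyMeasurable ?_
    filter_upwards [hps0 i, hp0 i] with y h1 h2
    rw [Real.norm_eq_abs, abs_of_nonneg (hgnn i y)]
    have e1 := Real.sq_sqrt h1
    have e2 := Real.sq_sqrt h2
    have e3 := sq_nonneg (Real.sqrt (ps i y) - Real.sqrt (p i y))
    simp only [hg, Pi.add_apply]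
    nlinarith
  -- Hellinger identity : the integral in S equals 2 - 2 * BC i
  have hHsq : ∀ i, (1 / 2 : ℝ) *
      (∫ y, (Real.sqrt (ps i y) - Real.sqrt (p i y)) ^ 2 ∂μ) = 1 - BC i := by
    intro i
    have hae : (fun y => (Real.sqrt (ps i y) - Real.sqrt (p i y)) ^ 2)
        =ᵐ[μ] fun y => ps i y + p i y - 2 * g i y := by
      filter_upwards [hps0 i, hp0 i] with y h1 h2
      rw [sub_sq, Real.sq_sqrt h1, Real.sq_sqrt h2]
      simp [hg]
      ring
    have hint1 : MeasureTheory.Integrable (fun y => ps i y + p i y) μ :=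
      (hpsInt i).add (hpInt i)
    have hint2 : MeasureTheory.Integrable (fun y => 2 * g i y) μ :=
      (hgInt i).const_mul 2
    rw [MeasureTheory.integral_congr_ae hae,
      MeasureTheory.integral_sub hint1 hint2,
      MeasureTheory.integral_add (hpsInt i) (hpInt i),
      MeasureTheory.integral_const_mul, hps1 i, hp1 i]
    simp only [hBCdef]
    ring
  have hBC0 : ∀ i, 0 ≤ BC i := fun i =>
    MeasureTheory.integral_nonneg (hgnn i)
  have hBCle : ∀ i, BC i ≤ Real.exp (-(1 - BC i)) := by
    intro i
    have := Real.add_one_le_exp (-(1 - BC i))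
    linarith
  -- the factor measures are probability measures
  have hps1' : ∀ i, ∫⁻ y, ENNReal.ofReal (ps i y) ∂μ = 1 := by
    intro i
    rw [← MeasureTheory.ofReal_integral_eq_lintegral_ofReal (hpsInt i) (hps0 i),
      hps1 i, ENNReal.ofReal_one]
  haveI hprob : ∀ i, MeasureTheory.IsProbabilityMeasure
      (μ.withDensity fun y => ENNReal.ofReal (ps i y)) := by
    intro i
    constructor
    rw [MeasureTheory.withDensity_apply _ MeasurableSet.univ,
      MeasureTheory.setLIntegral_univ]
    exact hps1' i
  -- rewrite the product measure as a density over the product of μ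
  rw [my_pi_withDensity μ n _ (fun i => (hpsm i).ennreal_ofReal)]
  set Λ : MeasureTheory.Measure (Fin n → Ω) :=
    MeasureTheory.Measure.pi fun _ : Fin n => μ with hΛ
  set A : Set (Fin n → Ω) := {x | ∏ i, p i (x i) > c * ∏ i, ps i (x i)} with hA
  have hAm : MeasurableSet A :=
    measurableSet_lt
      (measurable_const.mul (Finset.measurable_prod _ fun i _ =>
        (hpsm i).comp (measurable_pi_apply i)))
      (Finset.measurable_prod _ fun i _ => (hpm i).comp (measurable_pi_apply i))
  rw [MeasureTheory.withDensity_apply _ hAm,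
    ← MeasureTheory.lintegral_indicator hAm _]
  -- a.e. nonnegativity of all coordinates
  have hGood : ∀ᵐ x ∂Λ, ∀ i, 0 ≤ ps i (x i) ∧ 0 ≤ p i (x i) := by
    rw [MeasureTheory.ae_all_iff]
    intro i
    have hB : μ {y | ¬(0 ≤ ps i y ∧ 0 ≤ p i y)} = 0 := by
      have h := (hps0 i).and (hp0 i)
      rw [MeasureTheory.ae_iff] at h
      exact h
    rw [MeasureTheory.ae_iff]
    exact MeasureTheory.Measure.pi_eval_preimage_null (fun _ : Fin n => μ) hB
  -- key constants
  have hKpos : (0 : ℝ) < K := Real.exp_pos _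
  have hcpos : (0 : ℝ) < c := Real.exp_pos _
  have hKKc : K * K * c = 1 := by
    rw [hK, hc, ← Real.exp_add, ← Real.exp_add, ← Real.exp_zero]
    congr 1
    ring
  -- key real inequality
  have key : ∀ a s b : ℝ, 0 ≤ a → 0 ≤ s → s ^ 2 = a * b → c * a < b →
      a ≤ K * s := by
    intro a s b ha hs hsq hab
    have h2 : a ^ 2 ≤ (K * s) ^ 2 := by nlinarith
    calc a = Real.sqrt (a ^ 2) := (Real.sqrt_sq ha).symm
      _ ≤ Real.sqrt ((K * s) ^ 2) := Real.sqrt_le_sqrt h2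
      _ = K * s := Real.sqrt_sq (mul_nonneg hKpos.le hs)
  -- main chain
  calc ∫⁻ x, A.indicator (fun x => ∏ i, ENNReal.ofReal (ps i (x i))) x ∂Λ
      ≤ ∫⁻ x, ENNReal.ofReal K * ∏ i, ENNReal.ofReal (g i (x i)) ∂Λ := by
        refine MeasureTheory.lintegral_mono_ae ?_
        filter_upwards [hGood] with x hx
        by_cases hxA : x ∈ A
        · rw [Set.indicator_of_mem hxA]
          have ha : (0:ℝ) ≤ ∏ i, ps i (x i) :=
            Finset.prod_nonneg fun i _ => (hx i).1
          have hsnn : (0:ℝ) ≤ ∏ i, g i (x i) :=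
            Finset.prod_nonneg fun i _ => hgnn i (x i)
          have hsq : (∏ i, g i (x i)) ^ 2 = (∏ i, ps i (x i)) * ∏ i, p i (x i) := by
            have h1 : ∀ i : Fin n, (g i (x i)) ^ 2 = ps i (x i) * p i (x i) := by
              intro i
              simp only [hg]
              rw [mul_pow, Real.sq_sqrt (hx i).1, Real.sq_sqrt (hx i).2]
            rw [← Finset.prod_pow]
            simp_rw [h1]
            exact Finset.prod_mul_distrib
          have hlt : c * ∏ i, ps i (x i) < ∏ i, p i (x i) := hxA
          calc ∏ i, ENNReal.ofReal (ps i (x i))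
              = ENNReal.ofReal (∏ i, ps i (x i)) :=
                (ENNReal.ofReal_prod_of_nonneg fun i _ => (hx i).1).symm
            _ ≤ ENNReal.ofReal (K * ∏ i, g i (x i)) :=
                ENNReal.ofReal_le_ofReal (key _ _ _ ha hsnn hsq hlt)
            _ = ENNReal.ofReal K * ∏ i, ENNReal.ofReal (g i (x i)) := by
                rw [ENNReal.ofReal_mul hKpos.le,
                  ENNReal.ofReal_prod_of_nonneg fun i _ => hgnn i (x i)]
        · rw [Set.indicator_of_notMem hxA]
          exact zero_le
    _ = ENNReal.ofReal K * ∏ i, ∫⁻ y, ENNReal.ofReal (g i y) ∂μ := by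
        have hm : Measurable fun x : Fin n → Ω =>
            ∏ i, ENNReal.ofReal (g i (x i)) :=
          Finset.measurable_prod _ fun i _ =>
            ((hgm i).comp (measurable_pi_apply i)).ennreal_ofReal
        rw [MeasureTheory.lintegral_const_mul _ hm,
          my_lintegral_pi_prod n (fun _ : Fin n => μ) (fun _ => inferInstance)
            (fun i y => ENNReal.ofReal (g i y)) (fun i => (hgm i).ennreal_ofReal)]
    _ = ENNReal.ofReal K * ∏ i, ENNReal.ofReal (BC i) := by
        refine congrArg _ (Finset.prod_congr rfl fun i _ => ?_)
        rw [← MeasureTheory.ofReal_integral_eq_lintegral_ofReal (hgInt i)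
          (Filter.Eventually.of_forall (hgnn i))]
    _ ≤ ENNReal.ofReal K * ∏ i, ENNReal.ofReal (Real.exp (-(1 - BC i))) :=
        mul_le_mul_right (Finset.prod_le_prod' fun i _ =>
          ENNReal.ofReal_le_ofReal (hBCle i)) _
    _ ≤ ENNReal.ofReal δ := by
        rw [← ENNReal.ofReal_prod_of_nonneg fun i _ => (Real.exp_pos _).le,
          ← Real.exp_sum, ← ENNReal.ofReal_mul hKpos.le, ← Real.exp_add]
        refine ENNReal.ofReal_le_ofReal ?_
        have hsum : S - L + ∑ i, -(1 - BC i) = -L + ∑ i, -(1 - BC i) + S := by ring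
        have hSle : (S : ℝ) = ∑ i, (1 - BC i) := by
          rw [hS]
          exact Finset.sum_congr rfl fun i _ => hHsq i
        have : S - L + ∑ i, -(1 - BC i) = -L := by
          rw [Finset.sum_neg_distrib, ← hSle]
          ring
        rw [this, hL, one_div, Real.log_inv, neg_neg, Real.exp_log hδ]
end
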